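/- Let $y_1, y_2, \ldots$ be i.i.d. real random variables with common cumulative distribution function $F$, where $F$ is continuous and has connected support. Fix $x \in \mathbb{R}$ with $0 < F(x) < 1$ and set $\gamma := F(x)$. Let $F_N$ denote the empirical cdf of the first $N$ samples and $F^{-1}(\gamma) := \inf\{t : F(t) \ge \gamma\}$ the quantile function. Then $y_{(\lfloor \gamma N \rfloor)} - F^{-1}\bigl(F_N(x)\bigr) \to 0$ almost surely as $N \to \infty$. -/

import Mathlib

/-!
By the strong law of large numbers, almost surely `F_N(t) → F(t)` simultaneously at `x` and at
every rational `t`. Since `y_(l) ≤ t ↔ l ≤ N F_N(t)`, the order statistic `y_(⌊γN⌋)` is eventually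
squeezed between any two rationals `r < F⁻¹(γ) < r'`, because `F(r) < γ < F(r')` by the
connectedness of the support. The same strict crossing makes `F⁻¹` continuous at `γ`, so
`F⁻¹(F_N(x)) → F⁻¹(γ)` as well, and both terms share the limit `F⁻¹(γ)`.
-/

open MeasureTheory ProbabilityTheory Filter Topology

/-- `l`-th order statistic (1-indexed) of the first `N` values of `y`. -/
noncomputable def orderStat (N : ℕ) (y : ℕ → ℝ) (l : ℕ) : ℝ :=
  (List.insertionSort (· ≤ ·) (List.ofFn fun i : Fin N => y i)).getD (l - 1) 0

/-- The `γ`-quantile of a cdf `F`: `F⁻¹(γ) = inf {t | F t ≥ γ}`. -/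
noncomputable def quantile (F : ℝ → ℝ) (γ : ℝ) : ℝ := sInf {x | γ ≤ F x}

/-- Empirical cdf at `x` of the first `N` values of `y`. -/
noncomputable def empCdf (N : ℕ) (y : ℕ → ℝ) (x : ℝ) : ℝ :=
  (∑ i ∈ Finset.range N, if y i ≤ x then (1 : ℝ) else 0) / N

open Finset

theorem List.Pairwise.getElem_le_iff_lt_countP {α : Type*} [LinearOrder α] {L : List α}
    (hL : L.Pairwise (· ≤ ·)) {k : ℕ} (hk : k < L.length) (t : α) :
    L[k] ≤ t ↔ k < L.countP (· ≤ t) := by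
  induction L generalizing k with
  | nil => simp at hk
  | cons a L ih =>
    rw [List.pairwise_cons] at hL
    by_cases ha : a ≤ t
    · cases k with
      | zero => simp [ha]
      | succ j => simp [ha, ih hL.2]
    · have hgt : ∀ b ∈ L, ¬ b ≤ t := fun b hb hbt => ha ((hL.1 b hb).trans hbt)
      have hzero : L.countP (· ≤ t) = 0 := List.countP_eq_zero.2 (by simpa using hgt)
      cases k <;> simp [ha, hzero, hgt _ (List.getElem_mem _)]

theorem countP_ofFn_le_eq_card (N : ℕ) (y : ℕ → ℝ) (t : ℝ) :
    (List.ofFn fun i : Fin N => y i).countP (· ≤ t) = #{i ∈ Finset.range N | y i ≤ t} := by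
  have hofFn : (List.ofFn fun i : Fin N => y i) = (List.range N).map y := by
    rw [List.ofFn_eq_map, ← List.map_coe_finRange_eq_range, List.map_map]; rfl
  rw [hofFn, List.countP_map, Finset.card_def, Finset.filter_val, Finset.range_val,
    Multiset.range, Multiset.filter_coe, Multiset.coe_card, List.countP_eq_length_filter]
  rfl

theorem natCast_mul_empCdf (N : ℕ) (y : ℕ → ℝ) (t : ℝ) :
    N * empCdf N y t = #{i ∈ Finset.range N | y i ≤ t} := by
  rcases N.eq_zero_or_pos with rfl | hN
  · simp [empCdf]
  rw [empCdf, mul_div_cancel₀ _ (by positivity), Finset.sum_boole]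

theorem orderStat_le_iff {N l : ℕ} (hl1 : 1 ≤ l) (hlN : l ≤ N) (y : ℕ → ℝ) (t : ℝ) :
    orderStat N y l ≤ t ↔ (l : ℝ) ≤ N * empCdf N y t := by
  set L := (List.ofFn fun i : Fin N => y i).insertionSort (· ≤ ·)
  have hlen : l - 1 < L.length := by simp [L]; omega
  rw [orderStat, List.getD_eq_getElem _ _ hlen,
    (List.pairwise_insertionSort _ _).getElem_le_iff_lt_countP hlen,
    (List.perm_insertionSort _ _).countP_eq, countP_ofFn_le_eq_card, natCast_mul_empCdf,
    Nat.cast_le]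
  omega

theorem eventually_lt_orderStat_floor {y : ℕ → ℝ} {t d γ : ℝ} (hγ : γ ≤ 1)
    (ht : Tendsto (fun N => empCdf N y t) atTop (𝓝 d)) (hd : d < γ) :
    ∀ᶠ N : ℕ in atTop, t < orderStat N y ⌊γ * N⌋₊ := by
  have hgap : ∀ᶠ N : ℕ in atTop, 1 ≤ (γ - d) / 2 * N :=
    (tendsto_natCast_atTop_atTop.const_mul_atTop (by linarith)).eventually_ge_atTop 1
  filter_upwards [ht.eventually_lt_const (show d < (d + γ) / 2 by linarith), hgap]
    with N hemp hN
  have hcount : (N : ℝ) * empCdf N y t < ⌊γ * N⌋₊ := by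
    -- `N F_N(t) < N (d + γ) / 2 ≤ γ N - 1 < ⌊γ N⌋`
    have := Nat.sub_one_lt_floor (γ * N)
    nlinarith
  have hl1 : 0 < ⌊γ * N⌋₊ :=
    Nat.cast_pos.1 ((natCast_mul_empCdf N y t ▸ Nat.cast_nonneg _).trans_lt hcount)
  have hlN : ⌊γ * N⌋₊ ≤ N := Nat.floor_le_of_le (mul_le_of_le_one_left N.cast_nonneg hγ)
  exact not_le.1 fun h => hcount.not_ge ((orderStat_le_iff hl1 hlN y t).1 h)

theorem eventually_orderStat_floor_le {y : ℕ → ℝ} {t d γ : ℝ} (hγ0 : 0 < γ)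
    (hγ1 : γ ≤ 1) (ht : Tendsto (fun N => empCdf N y t) atTop (𝓝 d)) (hd : γ < d) :
    ∀ᶠ N : ℕ in atTop, orderStat N y ⌊γ * N⌋₊ ≤ t := by
  have hγN : ∀ᶠ N : ℕ in atTop, 1 ≤ γ * N :=
    (tendsto_natCast_atTop_atTop.const_mul_atTop hγ0).eventually_ge_atTop 1
  filter_upwards [ht.eventually_const_lt hd, hγN] with N hemp hN
  have hlN : ⌊γ * N⌋₊ ≤ N := Nat.floor_le_of_le (mul_le_of_le_one_left N.cast_nonneg hγ1)
  refine (orderStat_le_iff (Nat.le_floor (by exact_mod_cast hN)) hlN y t).2 ?_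
  calc (⌊γ * N⌋₊ : ℝ) ≤ γ * N := Nat.floor_le (by linarith)
    _ ≤ N * empCdf N y t := by rw [mul_comm]; gcongr

theorem tendsto_orderStat_floor {y : ℕ → ℝ} {G : ℝ → ℝ} {γ q : ℝ} (hγ0 : 0 < γ)
    (hγ1 : γ ≤ 1) (hG : ∀ r : ℚ, Tendsto (fun N => empCdf N y r) atTop (𝓝 (G r)))
    (hlt : ∀ r < q, G r < γ) (hgt : ∀ r > q, γ < G r) :
    Tendsto (fun N => orderStat N y ⌊γ * N⌋₊) atTop (𝓝 q) := by
  refine tendsto_order.2 ⟨fun a ha => ?_, fun b hb => ?_⟩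
  · obtain ⟨r, har, hrq⟩ := exists_rat_btwn ha
    exact (eventually_lt_orderStat_floor hγ1 (hG r) (hlt r hrq)).mono fun N hN => har.trans hN
  · obtain ⟨r, hqr, hrb⟩ := exists_rat_btwn hb
    exact (eventually_orderStat_floor_le hγ0 hγ1 (hG r) (hgt r hqr)).mono
      fun N hN => hN.trans_lt hrb

theorem quantile_mem_Icc {F : ℝ → ℝ} (hF : Monotone F) {γ a b : ℝ} (ha : F a < γ)
    (hb : γ ≤ F b) : quantile F γ ∈ Set.Icc a b := by
  have hlow : a ∈ lowerBounds {z | γ ≤ F z} := fun z hz => (hF.reflect_lt (ha.trans_le hz)).le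
  exact ⟨le_csInf ⟨b, hb⟩ hlow, csInf_le ⟨a, hlow⟩ hb⟩

theorem tendsto_quantile {F : ℝ → ℝ} (hF : Monotone F) {γ : ℝ}
    (hγ : ∀ ε > 0, γ < F (quantile F γ + ε) ∧ F (quantile F γ - ε) < γ)
    {α : Type*} {l : Filter α} {g : α → ℝ} (hg : Tendsto g l (𝓝 γ)) :
    Tendsto (fun n => quantile F (g n)) l (𝓝 (quantile F γ)) := by
  rw [Metric.tendsto_nhds]
  intro ε hε
  obtain ⟨hup, hdown⟩ := hγ (ε / 2) (half_pos hε)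
  filter_upwards [hg.eventually (lt_mem_nhds hdown), hg.eventually (gt_mem_nhds hup)]
    with n hlow hhigh
  have := quantile_mem_Icc hF hlow hhigh.le
  rw [Real.dist_eq, abs_sub_lt_iff]
  constructor <;> linarith [this.1, this.2]

theorem identDistrib_of_measure_le_eq {Ω : Type*} [MeasurableSpace Ω] {P : Measure Ω}
    [IsFiniteMeasure P] {X Y : Ω → ℝ} (hX : AEMeasurable X P) (hY : AEMeasurable Y P)
    (h : ∀ t, P {ω | X ω ≤ t} = P {ω | Y ω ≤ t}) : IdentDistrib X Y P P := by
  refine ⟨hX, hY, Measure.ext_of_Iic _ _ fun t => ?_⟩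
  rw [Measure.map_apply_of_aemeasurable hX measurableSet_Iic,
    Measure.map_apply_of_aemeasurable hY measurableSet_Iic]
  exact h t

theorem ae_tendsto_empCdf {Ω : Type*} [MeasurableSpace Ω] {P : Measure Ω} [IsFiniteMeasure P]
    {y : ℕ → Ω → ℝ} (hindep : Pairwise (Function.onFun (IndepFun · · P) y))
    (hident : ∀ i, IdentDistrib (y i) (y 0) P P) (t : ℝ) :
    ∀ᵐ ω ∂P, Tendsto (fun N => empCdf N (fun i => y i ω) t) atTop
      (𝓝 (P.real {ω | y 0 ω ≤ t})) := by
  set g : ℝ → ℝ := (Set.Iic t).indicator 1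
  have hg : Measurable g := measurable_one.indicator measurableSet_Iic
  have hint : Integrable g (P.map (y 0)) :=
    (integrable_indicator_iff measurableSet_Iic).2 (integrable_const 1).integrableOn
  have hy0 : AEMeasurable (y 0) P := (hident 0).aemeasurable_fst
  have hmean : ∫ ω, g (y 0 ω) ∂P = P.real {ω | y 0 ω ≤ t} := by
    rw [← integral_map hy0 hg.aestronglyMeasurable, integral_indicator_one measurableSet_Iic,
      measureReal_def, Measure.map_apply_of_aemeasurable hy0 measurableSet_Iic]
    rfl
  have hslln := strong_law_ae_real (fun i ω => g (y i ω)) (hint.comp_aemeasurable hy0)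
    (fun i j hij => (hindep hij).comp hg hg) (fun i => (hident i).comp hg)
  filter_upwards [hslln] with ω hω
  rw [← hmean]
  convert hω using 2 with N
  simp [empCdf, g, Set.indicator]

theorem orderStat_sub_quantile_empCdf_tendsto_zero_ae_general
    {Ω : Type*} [MeasurableSpace Ω] (P : Measure Ω) [IsProbabilityMeasure P]
    (y : ℕ → Ω → ℝ) (F : ℝ → ℝ)
    (hmeas : ∀ i, Measurable (y i))
    (hindep : iIndepFun y P)
    (hcdf : ∀ i t, P {ω | y i ω ≤ t} = ENNReal.ofReal (F t))
    (hmono : Monotone F)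
    (hconn : ∀ γ ∈ Set.Ioo (0 : ℝ) 1, ∀ ε > 0,
      γ < F (quantile F γ + ε) ∧ F (quantile F γ - ε) < γ)
    (x : ℝ) (hx0 : 0 < F x) (hx1 : F x < 1) :
    ∀ᵐ ω ∂P,
      Tendsto
        (fun N : ℕ =>
          orderStat N (fun i => y i ω) ⌊F x * N⌋₊ -
            quantile F (empCdf N (fun i => y i ω) x))
        atTop (𝓝 0) := by
  have hident : ∀ i, IdentDistrib (y i) (y 0) P P := fun i =>
    identDistrib_of_measure_le_eq (hmeas i).aemeasurable (hmeas 0).aemeasurable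
      fun t => by rw [hcdf, hcdf]
  have hpair : Pairwise (Function.onFun (IndepFun · · P) y) := fun i j hij => hindep.indepFun hij
  have hlim : ∀ t, P.real {ω | y 0 ω ≤ t} = max (F t) 0 := fun t => by
    rw [measureReal_def, hcdf, ENNReal.toReal_ofReal']
  have hq := hconn (F x) ⟨hx0, hx1⟩
  filter_upwards [ae_tendsto_empCdf hpair hident x,
    ae_all_iff.2 fun r : ℚ => ae_tendsto_empCdf hpair hident r] with ω hωx hωr
  rw [hlim, max_eq_left hx0.le] at hωx
  simp only [hlim] at hωr
  have hOS := tendsto_orderStat_floor hx0 hx1.le hωr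
    (fun r hr => max_lt (by simpa using (hq (quantile F (F x) - r) (sub_pos.2 hr)).2) hx0)
    (fun r hr => lt_max_of_lt_left (by simpa using (hq (r - quantile F (F x)) (sub_pos.2 hr)).1))
  simpa using hOS.sub (tendsto_quantile hmono hq hωx)

/-- The sample quantile and the quantile transform of the empirical cdf are almost surely
asymptotically equivalent: for i.i.d. data with a continuous cdf `F` of connected support,
`x` with `γ := F x ∈ (0,1)`, one has `y_(⌊γN⌋) - F⁻¹(F_N(x)) → 0` almost surely. -/
theorem orderStat_sub_quantile_empCdf_tendsto_zero_ae
    {Ω : Type*} [MeasurableSpace Ω] (P : Measure Ω) [IsProbabilityMeasure P]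
    (y : ℕ → Ω → ℝ) (F : ℝ → ℝ)
    (hmeas : ∀ i, Measurable (y i))
    (hindep : iIndepFun y P)
    (hcdf : ∀ i t, P {ω | y i ω ≤ t} = ENNReal.ofReal (F t))
    (hmono : Monotone F) (hcont : Continuous F)
    (hconn : ∀ γ ∈ Set.Ioo (0 : ℝ) 1, ∀ ε > 0,
      γ < F (quantile F γ + ε) ∧ F (quantile F γ - ε) < γ)
    (x : ℝ) (hx0 : 0 < F x) (hx1 : F x < 1) :
    ∀ᵐ ω ∂P,
      Tendsto
        (fun N : ℕ =>
          orderStat N (fun i => y i ω) ⌊F x * N⌋₊ -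
            quantile F (empCdf N (fun i => y i ω) x))
        atTop (𝓝 0) :=
  orderStat_sub_quantile_empCdf_tendsto_zero_ae_general P y F hmeas hindep hcdf hmono hconn x hx0
    hx1
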